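/- As f → 0, the product of the effective drag coefficient and the effective diffusion coefficient satisfies ζ(f)·D(f) = 1 + O(f²); that is, ζ(f)·D(f) − 1 is O(f²) near f = 0 (the non-dimensional Einstein relation holds to first order in f). -/

import Mathlib

open MeasureTheory intervalIntegral Asymptotics Filter

noncomputable def w0 (φ : ℝ → ℝ) (f x : ℝ) : ℝ :=
  ∫ s in (0:ℝ)..1, Real.exp (φ (x + s) - φ x - f * s)

noncomputable def M0 (φ : ℝ → ℝ) (f : ℝ) : ℝ := ∫ x in (0:ℝ)..1, w0 φ f x

noncomputable def w1 (φ : ℝ → ℝ) (f x : ℝ) : ℝ :=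
  ∫ s in (0:ℝ)..1, (w0 φ f (x + s)) ^ 2 * Real.exp (φ (x + s) - φ x - f * s)

noncomputable def M1 (φ : ℝ → ℝ) (f : ℝ) : ℝ := ∫ x in (0:ℝ)..1, w1 φ f x

/-!
Put `A = ∫₀¹ e^φ`, `B = ∫₀¹ e^{-φ}` and `E(f) = ∫₀¹ e^{-fs} ds`, so that `f E(f) = 1 - e^{-f}`,
`ζ = M₀ / E` and `ζ D - 1 = (M₁ - E M₀²) / (E M₀²)`. Expanding the integrands to first order in `f`,
uniformly in the integration variables, and integrating gives `E = 1 - f/2 + O(f²)`,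
`M₀ = AB - fQ + O(f²)` with `Q = ∫₀¹∫₀¹ s e^{φ(x+s)-φ(x)} ds dx`, and, since
`w₀(0,x) = A e^{-φ(x)}`, `M₁ = (AB)² - f (2ABQ + (AB)²/2) + O(f²)`. The term `(AB)²/2` comes from
`∫₀¹∫₀¹ s e^{-φ(x)-φ(x+s)} ds dx = B²/2`, which holds because the correlation
`c(s) = ∫₀¹ e^{-φ(x)-φ(x+s)} dx` satisfies `c(1 - s) = c(s)` by periodicity. So `M₁` and `E M₀²`
agree to first order, while `E M₀² → (AB)² ≠ 0`.
-/

open Real Set Topology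

variable {β γ : Type*}

/-- `g = a + ε * b + O(ε²)` along `l`, with bounded coefficients. For `l = 𝓝 0 ×ˢ 𝓟 S` and
`ε = Prod.fst` this is a first-order expansion in `f`, uniform in a parameter ranging over `S`. -/
def HasFirstOrderExpansion (l : Filter β) (ε g a b : β → ℝ) : Prop :=
  (a =O[l] fun _ => (1 : ℝ)) ∧ (b =O[l] fun _ => (1 : ℝ)) ∧
    (fun p => g p - (a p + ε p * b p)) =O[l] fun p => ε p ^ 2

namespace HasFirstOrderExpansion

variable {l : Filter β} {ε g g' a a' b b' g₁ g₂ a₁ a₂ b₁ b₂ : β → ℝ}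

theorem congr (h : HasFirstOrderExpansion l ε g a b) (hg : ∀ p, g p = g' p)
    (ha : ∀ p, a p = a' p) (hb : ∀ p, b p = b' p) : HasFirstOrderExpansion l ε g' a' b' := by
  rwa [← funext hg, ← funext ha, ← funext hb]

theorem of_isBigO_one (ha : a =O[l] fun _ => (1 : ℝ)) :
    HasFirstOrderExpansion l ε a a fun _ => 0 :=
  ⟨ha, isBigO_zero _ _, by simpa using isBigO_zero (fun p => ε p ^ 2) l⟩

theorem mono {l' : Filter β} (h : HasFirstOrderExpansion l ε g a b) (hl : l' ≤ l) :
    HasFirstOrderExpansion l' ε g a b :=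
  ⟨h.1.mono hl, h.2.1.mono hl, h.2.2.mono hl⟩

theorem comp_tendsto {l' : Filter γ} {m : γ → β} (h : HasFirstOrderExpansion l ε g a b)
    (hm : Tendsto m l' l) : HasFirstOrderExpansion l' (ε ∘ m) (g ∘ m) (a ∘ m) (b ∘ m) :=
  ⟨h.1.comp_tendsto hm, h.2.1.comp_tendsto hm, h.2.2.comp_tendsto hm⟩

theorem isBigO_sub (h : HasFirstOrderExpansion l ε g a b) (hε : ε =O[l] fun _ => (1 : ℝ)) :
    (fun p => g p - a p) =O[l] ε := by
  have hεb : (fun p => ε p * b p) =O[l] ε := by simpa using (isBigO_refl ε l).mul h.2.1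
  have hε₂ : (fun p => ε p ^ 2) =O[l] ε := by simpa [sq] using hε.mul (isBigO_refl ε l)
  exact (hεb.add (h.2.2.trans hε₂)).congr_left fun p => by ring

theorem mul (hε : ε =O[l] fun _ => (1 : ℝ)) (h₁ : HasFirstOrderExpansion l ε g₁ a₁ b₁)
    (h₂ : HasFirstOrderExpansion l ε g₂ a₂ b₂) :
    HasFirstOrderExpansion l ε (fun p => g₁ p * g₂ p) (fun p => a₁ p * a₂ p)
      (fun p => a₁ p * b₂ p + b₁ p * a₂ p) := by
  have hd₂ := h₂.isBigO_sub hε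
  obtain ⟨ha₁, hb₁, hr₁⟩ := h₁
  obtain ⟨ha₂, hb₂, hr₂⟩ := h₂
  have hg₂ : g₂ =O[l] fun _ => (1 : ℝ) :=
    (ha₂.add (hd₂.trans hε)).congr_left fun p => by ring
  refine ⟨by simpa using ha₁.mul ha₂, by simpa using (ha₁.mul hb₂).add (hb₁.mul ha₂), ?_⟩
  have t₁ : (fun p => (g₁ p - (a₁ p + ε p * b₁ p)) * g₂ p) =O[l] fun p => ε p ^ 2 := by
    simpa using hr₁.mul hg₂
  have t₂ : (fun p => a₁ p * (g₂ p - (a₂ p + ε p * b₂ p))) =O[l] fun p => ε p ^ 2 := by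
    simpa using ha₁.mul hr₂
  have t₃ : (fun p => ε p * b₁ p * (g₂ p - a₂ p)) =O[l] fun p => ε p ^ 2 := by
    simpa [sq] using ((isBigO_refl ε l).mul hb₁).mul hd₂
  exact ((t₁.add t₂).add t₃).congr_left fun p => by ring

theorem sub_isBigO (h₁ : HasFirstOrderExpansion l ε g₁ a b)
    (h₂ : HasFirstOrderExpansion l ε g₂ a b) :
    (fun p => g₁ p - g₂ p) =O[l] fun p => ε p ^ 2 :=
  (h₁.2.2.sub h₂.2.2).congr_left fun p => by ring

theorem tendsto_sub (h : HasFirstOrderExpansion l ε g a b) (hε : Tendsto ε l (𝓝 0)) :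
    Tendsto (fun p => g p - a p) l (𝓝 0) :=
  (h.isBigO_sub (hε.isBigO_one ℝ)).trans_tendsto hε

theorem isBigO_intervalIntegral {U : β × ℝ → ℝ} {w : β → ℝ}
    (h : U =O[l ×ˢ 𝓟 (Icc 0 1)] fun q => w q.1) :
    (fun p => ∫ t in (0:ℝ)..1, U (p, t)) =O[l] w := by
  obtain ⟨C, hC⟩ := h.bound
  rw [eventually_prod_principal_iff] at hC
  refine IsBigO.of_bound C ?_
  filter_upwards [hC] with p hp
  simpa using norm_integral_le_of_norm_le_const (a := 0) (b := 1) fun t ht =>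
    hp t (Ioc_subset_Icc_self (by simpa [uIoc_of_le zero_le_one] using ht))

theorem intervalIntegral {G A B : β × ℝ → ℝ}
    (h : HasFirstOrderExpansion (l ×ˢ 𝓟 (Icc 0 1)) (fun q => ε q.1) G A B)
    (hG : ∀ p, IntervalIntegrable (fun t => G (p, t)) volume 0 1)
    (hA : ∀ p, IntervalIntegrable (fun t => A (p, t)) volume 0 1)
    (hB : ∀ p, IntervalIntegrable (fun t => B (p, t)) volume 0 1) :
    HasFirstOrderExpansion l ε (fun p => ∫ t in (0:ℝ)..1, G (p, t))
      (fun p => ∫ t in (0:ℝ)..1, A (p, t)) (fun p => ∫ t in (0:ℝ)..1, B (p, t)) := by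
  refine ⟨isBigO_intervalIntegral h.1, isBigO_intervalIntegral h.2.1,
    (isBigO_intervalIntegral h.2.2).congr_left fun p => ?_⟩
  rw [integral_sub (hG p) ((hA p).add ((hB p).const_mul (ε p))), integral_add (hA p)
    ((hB p).const_mul (ε p)), intervalIntegral.integral_const_mul]

end HasFirstOrderExpansion

theorem hasFirstOrderExpansion_exp_neg_mul {l : Filter β} {ε s : β → ℝ}
    (hε : Tendsto ε l (𝓝 0)) (hs : ∀ᶠ p in l, s p ∈ Icc (0:ℝ) 1) :
    HasFirstOrderExpansion l ε (fun p => exp (-(ε p * s p))) (fun _ => 1) fun p => -s p := by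
  have hε1 : ∀ᶠ p in l, |ε p| ≤ 1 := by
    simpa using hε.eventually (Metric.closedBall_mem_nhds (0:ℝ) zero_lt_one)
  refine ⟨isBigO_refl _ _, IsBigO.of_bound 1 ?_, IsBigO.of_bound 1 ?_⟩
  · filter_upwards [hs] with p hp
    simpa [abs_le] using ⟨by linarith [hp.1], hp.2⟩
  · filter_upwards [hs, hε1] with p hp hp1
    have hεs : |ε p * s p| ≤ |ε p| := by
      rw [abs_mul]
      exact mul_le_of_le_one_right (abs_nonneg _) (abs_le.2 ⟨by linarith [hp.1], hp.2⟩)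
    have := abs_exp_sub_one_sub_id_le (x := -(ε p * s p)) (by rw [abs_neg]; linarith)
    simp only [Real.norm_eq_abs, one_mul, abs_pow, sq_abs]
    calc |exp (-(ε p * s p)) - (1 + ε p * -s p)| = |exp (-(ε p * s p)) - 1 - -(ε p * s p)| := by
          ring_nf
      _ ≤ (ε p * s p) ^ 2 := by simpa using this
      _ ≤ ε p ^ 2 := by rw [← sq_abs, ← sq_abs (ε p)]; gcongr

noncomputable def expNegAvg (f : ℝ) : ℝ := ∫ s in (0:ℝ)..1, exp (-(f * s))

theorem expNegAvg_mul (f : ℝ) : f * expNegAvg f = 1 - exp (-f) := by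
  rw [expNegAvg, ← intervalIntegral.integral_const_mul,
    integral_eq_sub_of_hasDerivAt (f := fun s => -exp (-(f * s))) (fun s _ => ?_)
      ((by fun_prop : Continuous fun s => f * exp (-(f * s))).intervalIntegrable 0 1)]
  · simp only [mul_one, mul_zero, neg_zero, exp_zero]
    ring
  · have h : HasDerivAt (fun s => -(f * s)) (-f) s := by
      simpa using (hasDerivAt_id s).const_mul (-f)
    convert h.exp.fun_neg using 1
    ring

theorem hasFirstOrderExpansion_expNegAvg :
    HasFirstOrderExpansion (𝓝 0) id expNegAvg (fun _ => 1) (fun _ => -1 / 2) := by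
  have hintegrand := hasFirstOrderExpansion_exp_neg_mul (l := 𝓝 0 ×ˢ 𝓟 (Icc 0 1))
    (ε := Prod.fst) (s := Prod.snd) tendsto_fst (tendsto_snd.eventually (eventually_mem_principal _))
  refine (hintegrand.intervalIntegral (ε := id)
    (fun f => (by fun_prop : Continuous fun s : ℝ => exp (-(f * s))).intervalIntegrable 0 1)
    (fun _ => intervalIntegrable_const) (fun _ => continuous_neg.intervalIntegrable 0 1)).congr
    (fun _ => rfl) (fun _ => by simp) (fun _ => ?_)
  rw [intervalIntegral.integral_neg, integral_id]
  norm_num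

theorem Function.Periodic.intervalIntegral_comp_add_left {g : ℝ → ℝ} (hg : Function.Periodic g 1)
    (x : ℝ) : ∫ s in (0:ℝ)..1, g (x + s) = ∫ s in (0:ℝ)..1, g s := by
  rw [integral_comp_add_left g x]
  simpa using hg.intervalIntegral_add_eq x 0

theorem intervalIntegral_mul_eq_half_of_symm {c : ℝ → ℝ} (hc : Continuous c)
    (hsymm : ∀ s, c (1 - s) = c s) :
    ∫ s in (0:ℝ)..1, s * c s = (∫ s in (0:ℝ)..1, c s) / 2 := by
  have hreflect : ∫ s in (0:ℝ)..1, s * c s = ∫ s in (0:ℝ)..1, (1 - s) * c s := by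
    have := integral_comp_sub_left (a := 0) (b := 1) (fun s => s * c s) 1
    simp only [sub_zero, sub_self, hsymm] at this
    exact this.symm
  have hsplit : ∫ s in (0:ℝ)..1, (1 - s) * c s
      = (∫ s in (0:ℝ)..1, c s) - ∫ s in (0:ℝ)..1, s * c s := by
    rw [← integral_sub (hc.intervalIntegrable 0 1)
      ((by fun_prop : Continuous fun s => s * c s).intervalIntegrable 0 1)]
    congr 1; ext s; ring
  linarith

theorem intervalIntegral_swap_of_continuous {F : ℝ → ℝ → ℝ} (hF : Continuous (Function.uncurry F)) :
    ∫ x in (0:ℝ)..1, ∫ y in (0:ℝ)..1, F x y = ∫ y in (0:ℝ)..1, ∫ x in (0:ℝ)..1, F x y :=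
  intervalIntegral_intervalIntegral_swap <|
    (hF.continuousOn.integrableOn_compact (isCompact_uIcc.prod isCompact_uIcc)).mono_set
      (prod_mono uIoc_subset_uIcc uIoc_subset_uIcc)

theorem intervalIntegral_mul_intervalIntegral_mul_shift {h : ℝ → ℝ} (hc : Continuous h)
    (hper : Function.Periodic h 1) :
    ∫ x in (0:ℝ)..1, h x * ∫ s in (0:ℝ)..1, s * h (x + s) = (∫ x in (0:ℝ)..1, h x) ^ 2 / 2 := by
  set c : ℝ → ℝ := fun s => ∫ x in (0:ℝ)..1, h x * h (x + s) with hc_def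
  have hcont : Continuous c :=
    continuous_parametric_intervalIntegral_of_continuous' (by fun_prop) 0 1
  have hmoment : ∫ x in (0:ℝ)..1, h x * ∫ s in (0:ℝ)..1, s * h (x + s)
      = ∫ s in (0:ℝ)..1, s * c s := by
    simp_rw [hc_def, ← intervalIntegral.integral_const_mul]
    rw [intervalIntegral_swap_of_continuous (by fun_prop)]
    congr 1; ext s; congr 1; ext x; ring
  have hsymm : ∀ s, c (1 - s) = c s := fun s => by
    have hshift := (show Function.Periodic (fun t => h (t + s) * h t) 1 from fun t => by
      simp only [add_right_comm t 1 s, hper _]).intervalIntegral_comp_add_left (-s)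
    calc ∫ x in (0:ℝ)..1, h x * h (x + (1 - s))
        = ∫ x in (0:ℝ)..1, h (-s + x + s) * h (-s + x) := by
          congr 1; ext x
          rw [show x + (1 - s) = -s + x + 1 by ring, hper, neg_add_cancel_comm, mul_comm]
      _ = ∫ x in (0:ℝ)..1, h x * h (x + s) := by rw [hshift]; congr 1; ext x; ring
  have htotal : ∫ s in (0:ℝ)..1, c s = (∫ x in (0:ℝ)..1, h x) ^ 2 := by
    simp only [hc_def]
    rw [← intervalIntegral_swap_of_continuous (F := fun x s => h x * h (x + s)) (by fun_prop)]
    simp_rw [intervalIntegral.integral_const_mul, hper.intervalIntegral_comp_add_left,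
      intervalIntegral.integral_mul_const, sq]
  rw [hmoment, intervalIntegral_mul_eq_half_of_symm hcont hsymm, htotal]

noncomputable def expIntegral (φ : ℝ → ℝ) : ℝ := ∫ x in (0:ℝ)..1, exp (φ x)

noncomputable def firstMoment (φ : ℝ → ℝ) (y : ℝ) : ℝ :=
  ∫ s in (0:ℝ)..1, s * exp (φ (y + s) - φ y)

section Potential

variable {φ : ℝ → ℝ}

theorem expIntegral_pos (hφc : Continuous φ) : 0 < expIntegral φ :=
  intervalIntegral_pos_of_pos ((by fun_prop : Continuous fun x => exp (φ x)).intervalIntegrable 0 1)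
    (fun _ => exp_pos _) zero_lt_one

theorem continuous_w0 (hφc : Continuous φ) (f : ℝ) : Continuous (w0 φ f) :=
  continuous_parametric_intervalIntegral_of_continuous' (by fun_prop) 0 1

theorem continuous_w1 (hφc : Continuous φ) (f : ℝ) : Continuous (w1 φ f) :=
  have := continuous_w0 hφc f
  continuous_parametric_intervalIntegral_of_continuous' (by fun_prop) 0 1

theorem continuous_firstMoment (hφc : Continuous φ) : Continuous (firstMoment φ) :=
  continuous_parametric_intervalIntegral_of_continuous' (by fun_prop) 0 1

theorem periodic_firstMoment (hφ : Function.Periodic φ 1) : Function.Periodic (firstMoment φ) 1 :=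
  fun y => by simp only [firstMoment, add_right_comm y 1, hφ _]

theorem exp_sub_isBigO_one (hφc : Continuous φ) (hφ : Function.Periodic φ 1) {l : Filter γ}
    (u v : γ → ℝ) : (fun q => exp (φ (u q) - φ (v q))) =O[l] fun _ => (1 : ℝ) := by
  obtain ⟨C, hC⟩ := isBounded_iff_forall_norm_le.1 (hφ.isBounded_of_continuous one_ne_zero hφc)
  refine IsBigO.of_bound (exp (2 * C)) (Eventually.of_forall fun q => ?_)
  have hu := abs_le.1 (hC _ (mem_range_self (u q)))
  have hv := abs_le.1 (hC _ (mem_range_self (v q)))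
  simpa [abs_of_pos (exp_pos _)] using exp_le_exp.2 (by linarith : φ (u q) - φ (v q) ≤ 2 * C)

theorem hasFirstOrderExpansion_w0_integrand (hφc : Continuous φ) (hφ : Function.Periodic φ 1) :
    HasFirstOrderExpansion ((𝓝 0 ×ˢ ⊤) ×ˢ 𝓟 (Icc 0 1)) (fun q : (ℝ × ℝ) × ℝ => q.1.1)
      (fun q => exp (φ (q.1.2 + q.2) - φ q.1.2 - q.1.1 * q.2))
      (fun q => exp (φ (q.1.2 + q.2) - φ q.1.2))
      (fun q => -(q.2 * exp (φ (q.1.2 + q.2) - φ q.1.2))) := by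
  have hε : Tendsto (fun q : (ℝ × ℝ) × ℝ => q.1.1) ((𝓝 0 ×ˢ ⊤) ×ˢ 𝓟 (Icc 0 1)) (𝓝 0) :=
    tendsto_fst.comp tendsto_fst
  have hk := HasFirstOrderExpansion.of_isBigO_one (l := (𝓝 0 ×ˢ ⊤) ×ˢ 𝓟 (Icc 0 1))
    (ε := fun q : (ℝ × ℝ) × ℝ => q.1.1)
    (exp_sub_isBigO_one hφc hφ (fun q : (ℝ × ℝ) × ℝ => q.1.2 + q.2) fun q => q.1.2)
  refine (hk.mul (hε.isBigO_one ℝ) (hasFirstOrderExpansion_exp_neg_mul hε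
      (tendsto_snd.eventually (eventually_mem_principal _)))).congr
    (fun q => ?_) (fun q => mul_one _) (fun q => by ring)
  rw [← exp_add]
  ring_nf

theorem integral_exp_comp_add (hφ : Function.Periodic φ 1) (x : ℝ) :
    ∫ s in (0:ℝ)..1, exp (φ (x + s)) = expIntegral φ :=
  (hφ.comp exp).intervalIntegral_comp_add_left x

theorem hasFirstOrderExpansion_w0 (hφc : Continuous φ) (hφ : Function.Periodic φ 1) :
    HasFirstOrderExpansion (𝓝 0 ×ˢ ⊤) Prod.fst (fun p => w0 φ p.1 p.2)
      (fun p => expIntegral φ * exp (-φ p.2)) (fun p => -firstMoment φ p.2) := by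
  refine ((hasFirstOrderExpansion_w0_integrand hφc hφ).intervalIntegral
    (fun p => (by fun_prop : Continuous _).intervalIntegrable 0 1)
    (fun p => (by fun_prop : Continuous _).intervalIntegrable 0 1)
    (fun p => (by fun_prop : Continuous _).intervalIntegrable 0 1)).congr
    (fun p => rfl) (fun p => ?_) (fun p => ?_)
  · simp_rw [exp_sub, div_eq_mul_inv, intervalIntegral.integral_mul_const, exp_neg]
    rw [integral_exp_comp_add hφ]
  · rw [intervalIntegral.integral_neg]; rfl

theorem hasFirstOrderExpansion_w1_integrand (hφc : Continuous φ) (hφ : Function.Periodic φ 1) :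
    HasFirstOrderExpansion ((𝓝 0 ×ˢ ⊤) ×ˢ 𝓟 (Icc 0 1)) (fun q : (ℝ × ℝ) × ℝ => q.1.1)
      (fun q => w0 φ q.1.1 (q.1.2 + q.2) ^ 2 * exp (φ (q.1.2 + q.2) - φ q.1.2 - q.1.1 * q.2))
      (fun q => expIntegral φ ^ 2 * exp (-φ q.1.2) * exp (-φ (q.1.2 + q.2)))
      (fun q => -(2 * expIntegral φ * exp (-φ q.1.2) * firstMoment φ (q.1.2 + q.2))
        - expIntegral φ ^ 2 * exp (-φ q.1.2) * (q.2 * exp (-φ (q.1.2 + q.2)))) := by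
  have hm : Tendsto (fun q : (ℝ × ℝ) × ℝ => (q.1.1, q.1.2 + q.2))
      ((𝓝 0 ×ˢ ⊤) ×ˢ 𝓟 (Icc 0 1)) (𝓝 0 ×ˢ ⊤) :=
    (tendsto_fst.comp tendsto_fst).prodMk tendsto_top
  have hε : (fun q : (ℝ × ℝ) × ℝ => q.1.1) =O[(𝓝 0 ×ˢ ⊤) ×ˢ 𝓟 (Icc 0 1)] fun _ => (1 : ℝ) :=
    (tendsto_fst.comp tendsto_fst).isBigO_one ℝ
  have hw0 := (hasFirstOrderExpansion_w0 hφc hφ).comp_tendsto hm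
  refine ((hw0.mul hε hw0).mul hε (hasFirstOrderExpansion_w0_integrand hφc hφ)).congr
    (fun q => by simp [sq]) (fun q => ?_) (fun q => ?_)
  · simp only [Function.comp, exp_sub, exp_neg]
    field_simp
  · simp only [Function.comp, exp_sub, exp_neg]
    field_simp
    ring

theorem hasFirstOrderExpansion_w1 (hφc : Continuous φ) (hφ : Function.Periodic φ 1) :
    HasFirstOrderExpansion (𝓝 0 ×ˢ ⊤) Prod.fst (fun p => w1 φ p.1 p.2)
      (fun p => expIntegral φ ^ 2 * expIntegral (-φ) * exp (-φ p.2))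
      (fun p => -(2 * expIntegral φ * (∫ x in (0:ℝ)..1, firstMoment φ x) * exp (-φ p.2))
        - expIntegral φ ^ 2 * exp (-φ p.2) * ∫ s in (0:ℝ)..1, s * exp (-φ (p.2 + s))) := by
  have hmoment : Continuous fun x => ∫ s in (0:ℝ)..1, s * exp (-φ (x + s)) :=
    continuous_parametric_intervalIntegral_of_continuous' (by fun_prop) 0 1
  have hq := continuous_firstMoment hφc
  refine ((hasFirstOrderExpansion_w1_integrand hφc hφ).intervalIntegral
    (fun p => by
      have := continuous_w0 hφc p.1
      exact (by fun_prop : Continuous fun t =>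
        w0 φ p.1 (p.2 + t) ^ 2 * exp (φ (p.2 + t) - φ p.2 - p.1 * t)).intervalIntegrable 0 1)
    (fun p => (by fun_prop : Continuous _).intervalIntegrable 0 1)
    (fun p => (by fun_prop : Continuous _).intervalIntegrable 0 1)).congr
    (fun p => rfl) (fun p => ?_) (fun p => ?_)
  · have hB := integral_exp_comp_add (φ := -φ) (hφ.comp Neg.neg) p.2
    simp only [Pi.neg_apply] at hB
    dsimp only
    rw [intervalIntegral.integral_const_mul, hB]
    ring
  · dsimp only
    rw [integral_sub ((by fun_prop : Continuous _).intervalIntegrable 0 1)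
        ((by fun_prop : Continuous _).intervalIntegrable 0 1), intervalIntegral.integral_neg,
      intervalIntegral.integral_const_mul, intervalIntegral.integral_const_mul,
      (periodic_firstMoment hφ).intervalIntegral_comp_add_left]
    ring

theorem hasFirstOrderExpansion_M0 (hφc : Continuous φ) (hφ : Function.Periodic φ 1) :
    HasFirstOrderExpansion (𝓝 0) id (M0 φ) (fun _ => expIntegral φ * expIntegral (-φ))
      (fun _ => -∫ x in (0:ℝ)..1, firstMoment φ x) := by
  have hw0 := (hasFirstOrderExpansion_w0 hφc hφ).mono (Filter.prod_mono le_rfl (le_top : 𝓟 (Icc (0:ℝ) 1) ≤ ⊤))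
  refine (hw0.intervalIntegral
    (ε := id) (fun f => (continuous_w0 hφc f).intervalIntegrable 0 1)
    (fun _ => (by fun_prop : Continuous fun x => expIntegral φ * exp (-φ x)).intervalIntegrable 0 1)
    (fun _ => (continuous_firstMoment hφc).neg.intervalIntegrable 0 1)).congr
    (fun _ => rfl) (fun _ => ?_) (fun _ => intervalIntegral.integral_neg)
  rw [intervalIntegral.integral_const_mul]
  rfl

theorem hasFirstOrderExpansion_M1 (hφc : Continuous φ) (hφ : Function.Periodic φ 1) :
    HasFirstOrderExpansion (𝓝 0) id (M1 φ) (fun _ => (expIntegral φ * expIntegral (-φ)) ^ 2)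
      (fun _ => -(2 * (expIntegral φ * expIntegral (-φ)) * ∫ x in (0:ℝ)..1, firstMoment φ x)
        - (expIntegral φ * expIntegral (-φ)) ^ 2 / 2) := by
  have hmoment : Continuous fun x => ∫ s in (0:ℝ)..1, s * exp (-φ (x + s)) :=
    continuous_parametric_intervalIntegral_of_continuous' (by fun_prop) 0 1
  have hw1 := (hasFirstOrderExpansion_w1 hφc hφ).mono (Filter.prod_mono le_rfl (le_top : 𝓟 (Icc (0:ℝ) 1) ≤ ⊤))
  refine (hw1.intervalIntegral
    (ε := id) (fun f => (continuous_w1 hφc f).intervalIntegrable 0 1)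
    (fun _ => (by fun_prop : Continuous _).intervalIntegrable 0 1)
    (fun _ => (by fun_prop : Continuous _).intervalIntegrable 0 1)).congr
    (fun _ => rfl) (fun _ => ?_) (fun _ => ?_)
  · dsimp only
    rw [intervalIntegral.integral_const_mul]
    simp only [expIntegral, Pi.neg_apply]
    ring
  · dsimp only
    rw [integral_sub ((by fun_prop : Continuous _).intervalIntegrable 0 1)
        ((by fun_prop : Continuous _).intervalIntegrable 0 1), intervalIntegral.integral_neg,
      intervalIntegral.integral_const_mul]
    simp_rw [mul_assoc (expIntegral φ ^ 2), intervalIntegral.integral_const_mul]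
    rw [intervalIntegral_mul_intervalIntegral_mul_shift (h := fun t => exp (-φ t)) (by fun_prop)
      (hφ.comp fun t => exp (-t))]
    simp only [expIntegral, Pi.neg_apply]
    ring

theorem hasFirstOrderExpansion_expNegAvg_mul_M0_sq (hφc : Continuous φ)
    (hφ : Function.Periodic φ 1) :
    HasFirstOrderExpansion (𝓝 0) id (fun f => expNegAvg f * M0 φ f ^ 2)
      (fun _ => (expIntegral φ * expIntegral (-φ)) ^ 2)
      (fun _ => -(2 * (expIntegral φ * expIntegral (-φ)) * ∫ x in (0:ℝ)..1, firstMoment φ x)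
        - (expIntegral φ * expIntegral (-φ)) ^ 2 / 2) := by
  have hε : (id : ℝ → ℝ) =O[𝓝 0] fun _ => (1 : ℝ) := tendsto_id.isBigO_one ℝ
  have hM0 := hasFirstOrderExpansion_M0 hφc hφ
  exact (hasFirstOrderExpansion_expNegAvg.mul hε (hM0.mul hε hM0)).congr
    (fun _ => by ring) (fun _ => by ring) (fun _ => by ring)

end Potential

theorem stmt_11 (φ : ℝ → ℝ) (hφc : Continuous φ) (hφper : ∀ x, φ (x + 1) = φ x)
    (ζ D : ℝ → ℝ)
    (hζ : ∀ f, f ≠ 0 → ζ f = f * M0 φ f / (1 - Real.exp (-f)))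
    (hζ0 : ζ 0 = M0 φ 0)
    (hD : ∀ f, D f = M1 φ f / (M0 φ f) ^ 3) :
    (fun f => ζ f * D f - 1) =O[nhds 0] (fun f => f ^ 2) := by
  have hP : (expIntegral φ * expIntegral (-φ)) ^ 2 ≠ 0 :=
    pow_ne_zero 2 (mul_pos (expIntegral_pos hφc) (expIntegral_pos hφc.neg)).ne'
  have hden := hasFirstOrderExpansion_expNegAvg_mul_M0_sq hφc hφper
  have hnum := (hasFirstOrderExpansion_M1 hφc hφper).sub_isBigO hden
  have hlim : Tendsto (fun f => expNegAvg f * M0 φ f ^ 2) (𝓝 0)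
      (𝓝 ((expIntegral φ * expIntegral (-φ)) ^ 2)) := by
    have := (hden.tendsto_sub tendsto_id).add_const ((expIntegral φ * expIntegral (-φ)) ^ 2)
    simpa only [sub_add_cancel, zero_add] using this
  have hζ' : ∀ f, ζ f = M0 φ f / expNegAvg f := by
    intro f
    rcases eq_or_ne f 0 with rfl | hf
    · simp [hζ0, expNegAvg]
    · rw [hζ f hf, ← expNegAvg_mul, mul_div_mul_left _ _ hf]
  have heq : (fun f => (M1 φ f - expNegAvg f * M0 φ f ^ 2) * (expNegAvg f * M0 φ f ^ 2)⁻¹)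
      =ᶠ[𝓝 0] fun f => ζ f * D f - 1 := by
    filter_upwards [hlim.eventually_ne hP] with f hf
    have hE : expNegAvg f ≠ 0 := left_ne_zero_of_mul hf
    have hM : M0 φ f ≠ 0 := pow_ne_zero_iff two_ne_zero |>.1 (right_ne_zero_of_mul hf)
    rw [hζ' f, hD f]
    field_simp
  simpa using (hnum.mul ((hlim.inv₀ hP).isBigO_one ℝ)).congr' heq EventuallyEq.rfl
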